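/- arXiv:2011.01556 — 2 statements merged into one kernel-verified Lean document; each statement's English description precedes it below -/
import Mathlib

section
/- Nonnegativity criterion with an L∞ bound and a subdomain Poincaré constant (Corollary A.1, Lipschitz formulation): Let N ≥ 1, let Ω ⊆ ℝ^N be a bounded open set, and let λ₁ > 0 and 0 ≤ λ < λ₁ be reals. Let n ≥ 1, and for each i ∈ {1,…,n} let aᵢ ≥ 0, pᵢ > 1 and Cᵢ > 0 be reals. Let f : ℝ → ℝ be continuous with −f(−t) ≤ λt + Σ_{i=1}^n aᵢ t^{pᵢ} for all t ≥ 0. Let û and u be Lipschitz test functions on Ω, let r ≥ 0 satisfy |u(x) − û(x)| ≤ r for all x ∈ Ω, and set Ω₀ := interior (Ω \ {x ∈ Ω : û(x) − r > 0}). Assume: (Poincaré inequality on Ω₀) λ₁ ∫ v(x)² dx ≤ ∫ ‖fderiv ℝ v x‖² dx for every Lipschitz test function v on Ω₀; (Sobolev embedding on Ω) for each i, (∫ |v(x)|^{pᵢ+1} dx)^{1/(pᵢ+1)} ≤ Cᵢ (∫ ‖fderiv ℝ v x‖² dx)^{1/2} for every Lipschitz test function v on Ω; and that u is a weak solution of −Δu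 = f(u) on Ω, i.e., ∫ ⟨∇u(x), ∇v(x)⟩ dx = ∫ f(u(x)) v(x) dx for every Lipschitz test function v on Ω. Let ρ ≥ 0 satisfy ∫ ‖fderiv ℝ (u − û) x‖² dx ≤ ρ². If Σ_{i=1}^n aᵢ Cᵢ² ( (∫ (û_-(x))^{pᵢ+1} dx)^{1/(pᵢ+1)} + Cᵢ ρ )^{pᵢ−1} < 1 − λ/λ₁, then u(x) ≥ 0 for all x ∈ ℝ^N. -/
open MeasureTheory Real Set
open scoped RealInnerProductSpace

/-- A Lipschitz test function on an open set `Ω ⊆ ℝ^N`: a Lipschitz function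
vanishing outside `Ω`. -/
def IsLipTest {N : ℕ} (Ω : Set (EuclideanSpace ℝ (Fin N)))
    (v : EuclideanSpace ℝ (Fin N) → ℝ) : Prop :=
  (∃ K, LipschitzWith K v) ∧ ∀ x, x ∉ Ω → v x = 0

/-!
Test the weak equation with the negative part `w = max (-u) 0`. Since `u > û - r > 0` wherever
`û > r`, `w` is a Lipschitz test function on `Ω₀`. As `∇w = -∇u` on `{u < 0}` and `∇w = 0`
elsewhere, `‖∇w‖₂² = -∫ f(u) w ≤ λ ‖w‖₂² + ∑ aᵢ ‖w‖_{pᵢ+1}^{pᵢ+1}`. By Minkowski and the Sobolev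
inequality applied to `u - û`, `‖w‖_{p+1} ≤ ‖û₋‖_{p+1} + ‖u - û‖_{p+1} ≤ ‖û₋‖_{p+1} + C ρ`, while
`‖w‖_{p+1}² ≤ C² ‖∇w‖₂²`; hence the sum is at most `T ‖∇w‖₂²`, where
`T = ∑ aᵢ Cᵢ² (‖û₋‖_{pᵢ+1} + Cᵢ ρ)^{pᵢ-1} < 1 - λ/λ₁`. Together with the Poincaré inequality on
`Ω₀` this forces `‖w‖₂ = 0`, so `w = 0` by continuity.
-/

theorem neg_mul_negPart_le {ι : Type*} {s : Finset ι} {f : ℝ → ℝ} {lam : ℝ} {a p : ι → ℝ}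
    (hfb : ∀ t : ℝ, 0 ≤ t → -f (-t) ≤ lam * t + ∑ i ∈ s, a i * t ^ (p i))
    (hp : ∀ i ∈ s, 0 < p i + 1) (t : ℝ) :
    -(f t * max (-t) 0) ≤ lam * max (-t) 0 ^ 2 + ∑ i ∈ s, a i * max (-t) 0 ^ (p i + 1) := by
  rcases lt_or_ge t 0 with ht | ht
  · have hw : 0 < -t := neg_pos.2 ht
    rw [max_eq_left hw.le]
    calc -(f t * -t) = -f (-(-t)) * -t := by ring_nf
      _ ≤ (lam * -t + ∑ i ∈ s, a i * (-t) ^ (p i)) * -t :=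
        mul_le_mul_of_nonneg_right (hfb (-t) hw.le) hw.le
      _ = lam * (-t) ^ 2 + ∑ i ∈ s, a i * (-t) ^ (p i + 1) := by
        simp only [add_mul, Finset.sum_mul, mul_assoc, ← rpow_add_one hw.ne']
        ring
  · rw [max_eq_right (neg_nonpos.2 ht)]
    have hzero : ∑ i ∈ s, a i * (0 : ℝ) ^ (p i + 1) = 0 :=
      Finset.sum_eq_zero fun i hi => by rw [zero_rpow (hp i hi).ne', mul_zero]
    simp [hzero]

theorem rpow_add_one_le_of_le_sqrt {X B C D p : ℝ} (hp : 1 < p) (hX : 0 ≤ X) (hD : 0 ≤ D)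
    (hXD : X ≤ C * D ^ ((1 : ℝ) / 2)) (hXB : X ≤ B) :
    X ^ (p + 1) ≤ C ^ 2 * B ^ (p - 1) * D := by
  have hsq : X ^ 2 ≤ C ^ 2 * D := by
    calc X ^ 2 ≤ (C * D ^ ((1 : ℝ) / 2)) ^ 2 := pow_le_pow_left₀ hX hXD 2
      _ = C ^ 2 * D := by rw [mul_pow, ← rpow_natCast (D ^ _), ← rpow_mul hD]; norm_num
  rcases hX.eq_or_lt with rfl | hX
  · rw [zero_rpow (by linarith)]
    nlinarith [rpow_nonneg (hX.trans hXB) (p - 1)]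
  · calc X ^ (p + 1) = X ^ (p - 1) * X ^ 2 := by
          rw [← rpow_natCast, ← rpow_add hX]; ring_nf
      _ ≤ B ^ (p - 1) * (C ^ 2 * D) :=
          mul_le_mul (rpow_le_rpow hX.le hXB (by linarith)) hsq (by positivity)
            (rpow_nonneg (hX.le.trans hXB) _)
      _ = C ^ 2 * B ^ (p - 1) * D := by ring

theorem eq_zero_of_poincare_of_energy_le {lam₁ lam T D W : ℝ} (hlam₁ : 0 < lam₁)
    (hlam : 0 ≤ lam) (hW : 0 ≤ W) (hPo : lam₁ * W ≤ D) (hD : D ≤ lam * W + T * D)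
    (hT : T < 1 - lam / lam₁) : W = 0 := by
  -- Poincaré turns `lam * W` into `lam / lam₁ * D`, so `D ≤ (lam / lam₁ + T) * D` with `D ≥ 0`.
  have hlamW : lam * W ≤ lam / lam₁ * D := by
    rw [div_mul_eq_mul_div, le_div_iff₀ hlam₁]
    nlinarith
  have hD0 : D ≤ 0 := by nlinarith
  nlinarith

section NegPart

variable {E : Type*} [NormedAddCommGroup E] {u : E → ℝ} {x : E}

theorem fderiv_negPart [NormedSpace ℝ E] (hu : ContinuousAt u x) :
    fderiv ℝ (fun y => max (-u y) 0) x = if u x < 0 then -fderiv ℝ u x else 0 := by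
  split_ifs with hx
  · have hloc : (fun y => max (-u y) 0) =ᶠ[nhds x] fun y => -u y := by
      filter_upwards [hu.eventually_lt continuousAt_const hx] with y hy
      exact max_eq_left (by linarith)
    rw [hloc.fderiv_eq, fderiv_fun_neg]
  · have hmin : IsLocalMin (fun y => max (-u y) 0) x := Filter.Eventually.of_forall fun y => by
      simp only [max_eq_right (neg_nonpos.2 (not_lt.1 hx))]
      exact le_max_right _ _
    exact hmin.fderiv_eq_zero

theorem inner_gradient_negPart [InnerProductSpace ℝ E] [CompleteSpace E] (hu : ContinuousAt u x) :
    ⟪gradient u x, gradient (fun y => max (-u y) 0) x⟫ =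
      -‖fderiv ℝ (fun y => max (-u y) 0) x‖ ^ 2 := by
  simp only [gradient, fderiv_negPart hu]
  split_ifs
  · rw [map_neg, inner_neg_right, real_inner_self_eq_norm_sq, norm_neg,
      LinearIsometryEquiv.norm_map]
  · simp

end NegPart

theorem lpNorm_ofReal_eq_integral {α : Type*} [MeasurableSpace α] {μ : Measure α} {g : α → ℝ}
    {q : ℝ} (hq : 0 < q) (hg : AEStronglyMeasurable g μ) :
    lpNorm g (ENNReal.ofReal q) μ = (∫ x, |g x| ^ q ∂μ) ^ (1 / q) := by
  rw [lpNorm_eq_integral_norm_rpow_toReal (by simpa using hq) ENNReal.ofReal_ne_top hg,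
    ENNReal.toReal_ofReal hq.le, one_div]
  rfl

theorem lpNorm_negPart_le {α : Type*} [MeasurableSpace α] {μ : Measure α} {u v : α → ℝ}
    {q : ENNReal} (hq : 1 ≤ q) (hv : MemLp (fun x => max (-v x) 0) q μ)
    (huv : MemLp (u - v) q μ) :
    lpNorm (fun x => max (-u x) 0) q μ ≤
      lpNorm (fun x => max (-v x) 0) q μ + lpNorm (u - v) q μ := by
  refine (lpNorm_le_lpNorm_add_lpNorm_sub' hv hq).trans (add_le_add_right ?_ _)
  calc lpNorm ((fun x => max (-u x) 0) - fun x => max (-v x) 0) q μ ≤ lpNorm |u - v| q μ :=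
        lpNorm_mono_real huv.abs fun x => by
          simpa [abs_sub_comm (u x), neg_add_eq_sub] using abs_max_sub_max_le_abs (-u x) (-v x) 0
    _ = lpNorm (u - v) q μ := lpNorm_abs huv.aestronglyMeasurable q

theorem Continuous.eq_zero_of_integral_sq_eq_zero {X : Type*} [TopologicalSpace X]
    [MeasurableSpace X] [OpensMeasurableSpace X] {μ : Measure X} [μ.IsOpenPosMeasure]
    {v : X → ℝ} (hv : Continuous v) (hint : Integrable (fun x => v x ^ 2) μ)
    (h : ∫ x, v x ^ 2 ∂μ = 0) : v = 0 := by
  have hae := (integral_eq_zero_iff_of_nonneg (fun x => sq_nonneg (v x)) hint).1 h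
  have hsq := ((hv.pow 2).ae_eq_iff_eq μ continuous_const).1 hae
  exact funext fun x => pow_eq_zero_iff two_ne_zero |>.1 (congrFun hsq x)

section EuclideanSpace

variable {N : ℕ} {Ω U : Set (EuclideanSpace ℝ (Fin N))}
  {u v uhat : EuclideanSpace ℝ (Fin N) → ℝ}

namespace IsLipTest

theorem continuous (hv : IsLipTest Ω v) : Continuous v :=
  hv.1.choose_spec.continuous

theorem sub (hu : IsLipTest Ω u) (hv : IsLipTest Ω v) : IsLipTest Ω (u - v) :=
  ⟨⟨_, hu.1.choose_spec.sub hv.1.choose_spec⟩, fun x hx => by simp [hu.2 x hx, hv.2 x hx]⟩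

theorem negPart (hv : IsLipTest Ω v) : IsLipTest Ω (fun x => max (-v x) 0) :=
  ⟨⟨_, hv.1.choose_spec.neg.max_const 0⟩, fun x hx => by simp [hv.2 x hx]⟩

theorem diff (hv : IsLipTest Ω v) (hU : ∀ x ∈ U, v x = 0) : IsLipTest (Ω \ U) v :=
  ⟨hv.1, fun x hx => by
    by_cases hxΩ : x ∈ Ω
    · exact hU x (by simpa [hxΩ] using hx)
    · exact hv.2 x hxΩ⟩

/-- The zero set of `v` is closed, so it contains `closure Ωᶜ = (interior Ω)ᶜ`. -/
theorem interior (hv : IsLipTest Ω v) : IsLipTest (interior Ω) v := by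
  refine ⟨hv.1, fun x hx => ?_⟩
  have hzero : closure Ωᶜ ⊆ {y | v y = 0} :=
    (isClosed_eq hv.continuous continuous_const).closure_subset_iff.2 hv.2
  exact hzero (by rwa [closure_compl])

theorem hasCompactSupport (hΩ : Bornology.IsBounded Ω) (hv : IsLipTest Ω v) :
    HasCompactSupport v :=
  .of_isClosed_subset hΩ.isCompact_closure (isClosed_tsupport v)
    (closure_mono fun x hx => by_contra fun h => hx (hv.2 x h))

theorem memLp (hΩ : Bornology.IsBounded Ω) (hv : IsLipTest Ω v) (q : ENNReal) :
    MemLp v q volume :=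
  hv.continuous.memLp_of_hasCompactSupport (hv.hasCompactSupport hΩ)

theorem integrable_comp (hΩ : Bornology.IsBounded Ω) (hv : IsLipTest Ω v) {g : ℝ → ℝ}
    (hg : Continuous g) (hg0 : g 0 = 0) : Integrable (fun x => g (v x)) :=
  (hg.comp hv.continuous).integrable_of_hasCompactSupport
    ((hv.hasCompactSupport hΩ).comp_left hg0)

end IsLipTest

theorem isLipTest_negPart_interior_diff (hu : IsLipTest Ω u) {r : ℝ}
    (hLinf : ∀ x ∈ Ω, |u x - uhat x| ≤ r) :
    IsLipTest (interior (Ω \ {x ∈ Ω | 0 < uhat x - r})) (fun x => max (-u x) 0) :=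
  (hu.negPart.diff fun x hx =>
    max_eq_right (by linarith [(abs_le.1 (hLinf x hx.1)).1, hx.2])).interior

theorem integral_norm_fderiv_negPart_sq_le {ι : Type*} {s : Finset ι} {f : ℝ → ℝ} {lam : ℝ}
    {a p : ι → ℝ} (hΩ : Bornology.IsBounded Ω) (hf : Continuous f)
    (hfb : ∀ t : ℝ, 0 ≤ t → -f (-t) ≤ lam * t + ∑ i ∈ s, a i * t ^ (p i))
    (hp : ∀ i ∈ s, 0 < p i + 1) (hu : IsLipTest Ω u)
    (hweak : ∀ v, IsLipTest Ω v →
      ∫ x, ⟪gradient u x, gradient v x⟫ = ∫ x, f (u x) * v x) :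
    ∫ x, ‖fderiv ℝ (fun y => max (-u y) 0) x‖ ^ 2 ≤
      lam * (∫ x, max (-u x) 0 ^ 2) + ∑ i ∈ s, a i * ∫ x, max (-u x) 0 ^ (p i + 1) := by
  have hw := hu.negPart
  have henergy : ∫ x, ‖fderiv ℝ (fun y => max (-u y) 0) x‖ ^ 2 =
      ∫ x, -(f (u x) * max (-u x) 0) := by
    rw [integral_neg, ← hweak _ hw, ← integral_neg]
    simp only [inner_gradient_negPart hu.continuous.continuousAt, neg_neg]
  have hint_lhs : Integrable fun x => -(f (u x) * max (-u x) 0) :=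
    ((hf.comp hu.continuous).mul hw.continuous).integrable_of_hasCompactSupport
      (hw.hasCompactSupport hΩ).mul_left |>.neg
  have hint_sq : Integrable fun x => max (-u x) 0 ^ 2 :=
    hw.integrable_comp hΩ (continuous_pow 2) (by simp)
  have hint_rpow : ∀ i ∈ s, Integrable fun x => max (-u x) 0 ^ (p i + 1) := fun i hi =>
    hw.integrable_comp hΩ (continuous_id.rpow_const fun _ => Or.inr (hp i hi).le)
      (zero_rpow (hp i hi).ne')
  have hint_sum : Integrable fun x => ∑ i ∈ s, a i * max (-u x) 0 ^ (p i + 1) :=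
    integrable_finsetSum s fun i hi => (hint_rpow i hi).const_mul (a i)
  calc ∫ x, ‖fderiv ℝ (fun y => max (-u y) 0) x‖ ^ 2
      ≤ ∫ x, (lam * max (-u x) 0 ^ 2 + ∑ i ∈ s, a i * max (-u x) 0 ^ (p i + 1)) :=
        henergy ▸ integral_mono hint_lhs ((hint_sq.const_mul lam).add hint_sum)
          fun x => neg_mul_negPart_le hfb hp (u x)
    _ = lam * (∫ x, max (-u x) 0 ^ 2) + ∑ i ∈ s, a i * ∫ x, max (-u x) 0 ^ (p i + 1) := by
        rw [integral_add (hint_sq.const_mul lam) hint_sum, integral_const_mul,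
          integral_finsetSum s fun i hi => (hint_rpow i hi).const_mul (a i)]
        simp only [integral_const_mul]

theorem integral_negPart_rpow_le (hΩ : Bornology.IsBounded Ω) {p C ρ : ℝ} (hp : 1 < p)
    (hC : 0 ≤ C) (hρ : 0 ≤ ρ)
    (hSobolev : ∀ v, IsLipTest Ω v →
      (∫ x, |v x| ^ (p + 1)) ^ (1 / (p + 1)) ≤ C * (∫ x, ‖fderiv ℝ v x‖ ^ 2) ^ ((1 : ℝ) / 2))
    (hu : IsLipTest Ω u) (huhat : IsLipTest Ω uhat)
    (herr : ∫ x, ‖fderiv ℝ (u - uhat) x‖ ^ 2 ≤ ρ ^ 2) :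
    ∫ x, max (-u x) 0 ^ (p + 1) ≤
      C ^ 2 * ((∫ x, max (-uhat x) 0 ^ (p + 1)) ^ (1 / (p + 1)) + C * ρ) ^ (p - 1) *
        ∫ x, ‖fderiv ℝ (fun y => max (-u y) 0) x‖ ^ 2 := by
  have hq : 0 < p + 1 := by linarith
  have hlpNorm : ∀ v, IsLipTest Ω v →
      (∫ x, |v x| ^ (p + 1)) ^ (1 / (p + 1)) = lpNorm v (ENNReal.ofReal (p + 1)) volume :=
    fun v hv => (lpNorm_ofReal_eq_integral hq hv.continuous.aestronglyMeasurable).symm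
  have hX_sobolev := hSobolev _ hu.negPart
  have hdiff : (∫ x, |(u - uhat) x| ^ (p + 1)) ^ (1 / (p + 1)) ≤ C * ρ := by
    refine (hSobolev _ (hu.sub huhat)).trans (mul_le_mul_of_nonneg_left ?_ hC)
    calc (∫ x, ‖fderiv ℝ (u - uhat) x‖ ^ 2) ^ ((1 : ℝ) / 2) ≤ (ρ ^ 2) ^ ((1 : ℝ) / 2) :=
          rpow_le_rpow (integral_nonneg fun x => by positivity) herr (by norm_num)
      _ = ρ := by rw [← sqrt_eq_rpow, sqrt_sq hρ]
  have hX_triangle := lpNorm_negPart_le (ENNReal.one_le_ofReal.2 (by linarith))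
    (huhat.negPart.memLp hΩ _) ((hu.sub huhat).memLp hΩ (ENNReal.ofReal (p + 1)))
  rw [← hlpNorm _ hu.negPart, ← hlpNorm _ huhat.negPart, ← hlpNorm _ (hu.sub huhat)]
    at hX_triangle
  simp only [abs_of_nonneg (le_max_right _ (0 : ℝ))] at hX_sobolev hX_triangle
  have hint_nonneg : 0 ≤ ∫ x, max (-u x) 0 ^ (p + 1) :=
    integral_nonneg fun x => rpow_nonneg (le_max_right _ _) _
  calc ∫ x, max (-u x) 0 ^ (p + 1)
      = ((∫ x, max (-u x) 0 ^ (p + 1)) ^ (1 / (p + 1))) ^ (p + 1) := by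
        rw [← rpow_mul hint_nonneg, one_div_mul_cancel hq.ne', rpow_one]
    _ ≤ _ := rpow_add_one_le_of_le_sqrt hp (rpow_nonneg hint_nonneg _)
        (integral_nonneg fun x => by positivity) hX_sobolev (by linarith)

end EuclideanSpace

theorem nonneg_of_Linf_bound_subdomain_general
    {N : ℕ}
    (Ω : Set (EuclideanSpace ℝ (Fin N)))
    (hΩb : Bornology.IsBounded Ω)
    (lam₁ lam : ℝ) (hlam₁ : 0 < lam₁) (hlam0 : 0 ≤ lam)
    (n : ℕ) (a p C : ℕ → ℝ)
    (ha : ∀ i ∈ Finset.Icc 1 n, 0 ≤ a i)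
    (hp : ∀ i ∈ Finset.Icc 1 n, 1 < p i)
    (hC : ∀ i ∈ Finset.Icc 1 n, 0 < C i)
    (f : ℝ → ℝ) (hf : Continuous f)
    (hfb : ∀ t : ℝ, 0 ≤ t →
      -f (-t) ≤ lam * t + ∑ i ∈ Finset.Icc 1 n, a i * t ^ (p i))
    (uhat u : EuclideanSpace ℝ (Fin N) → ℝ)
    (huhat : IsLipTest Ω uhat) (hu : IsLipTest Ω u)
    (r : ℝ) (hLinf : ∀ x ∈ Ω, |u x - uhat x| ≤ r)
    (hPoincare : ∀ v, IsLipTest (interior (Ω \ {x ∈ Ω | 0 < uhat x - r})) v →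
      lam₁ * ∫ x, (v x) ^ 2 ≤ ∫ x, ‖fderiv ℝ v x‖ ^ 2)
    (hSobolev : ∀ i ∈ Finset.Icc 1 n, ∀ v, IsLipTest Ω v →
      (∫ x, |v x| ^ (p i + 1)) ^ (1 / (p i + 1)) ≤
        C i * (∫ x, ‖fderiv ℝ v x‖ ^ 2) ^ ((1 : ℝ) / 2))
    (hweak : ∀ v, IsLipTest Ω v →
      ∫ x, ⟪gradient u x, gradient v x⟫ = ∫ x, f (u x) * v x)
    (ρ : ℝ) (hρ : 0 ≤ ρ)
    (herr : ∫ x, ‖fderiv ℝ (u - uhat) x‖ ^ 2 ≤ ρ ^ 2)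
    (hcond : ∑ i ∈ Finset.Icc 1 n,
        a i * C i ^ 2 *
          ((∫ x, (max (-uhat x) 0) ^ (p i + 1)) ^ (1 / (p i + 1)) + C i * ρ)
            ^ (p i - 1)
        < 1 - lam / lam₁) :
    ∀ x, 0 ≤ u x := by
  have hw := hu.negPart
  have henergy := integral_norm_fderiv_negPart_sq_le hΩb hf hfb
    (fun i hi => by linarith [hp i hi]) hu hweak
  have hsobolev : ∑ i ∈ Finset.Icc 1 n, a i * ∫ x, max (-u x) 0 ^ (p i + 1) ≤
      (∑ i ∈ Finset.Icc 1 n, a i * C i ^ 2 *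
        ((∫ x, (max (-uhat x) 0) ^ (p i + 1)) ^ (1 / (p i + 1)) + C i * ρ) ^ (p i - 1)) *
        ∫ x, ‖fderiv ℝ (fun y => max (-u y) 0) x‖ ^ 2 := by
    rw [Finset.sum_mul]
    refine Finset.sum_le_sum fun i hi => ?_
    simpa only [mul_assoc] using mul_le_mul_of_nonneg_left (integral_negPart_rpow_le hΩb
      (hp i hi) (hC i hi).le hρ (hSobolev i hi) hu huhat herr) (ha i hi)
  have hL2 := eq_zero_of_poincare_of_energy_le hlam₁ hlam0
    (integral_nonneg fun x => sq_nonneg _)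
    (hPoincare _ (isLipTest_negPart_interior_diff hu hLinf)) (henergy.trans (by gcongr)) hcond
  have hw0 := hw.continuous.eq_zero_of_integral_sq_eq_zero
    (hw.integrable_comp hΩb (continuous_pow 2) (by simp)) hL2
  intro x
  simpa using congrFun hw0 x

/-- Nonnegativity criterion with an `L∞` bound and a Poincaré constant on the
subdomain `Ω₀ = interior (Ω \ {x ∈ Ω : û(x) - r > 0})`
(Corollary A.1, Lipschitz formulation). -/
theorem nonneg_of_Linf_bound_subdomain
    {N : ℕ} (hN : 1 ≤ N)
    (Ω : Set (EuclideanSpace ℝ (Fin N))) (hΩo : IsOpen Ω)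
    (hΩb : Bornology.IsBounded Ω)
    (lam₁ lam : ℝ) (hlam₁ : 0 < lam₁) (hlam0 : 0 ≤ lam) (hlam : lam < lam₁)
    (n : ℕ) (hn : 1 ≤ n) (a p C : ℕ → ℝ)
    (ha : ∀ i ∈ Finset.Icc 1 n, 0 ≤ a i)
    (hp : ∀ i ∈ Finset.Icc 1 n, 1 < p i)
    (hC : ∀ i ∈ Finset.Icc 1 n, 0 < C i)
    (f : ℝ → ℝ) (hf : Continuous f)
    (hfb : ∀ t : ℝ, 0 ≤ t →
      -f (-t) ≤ lam * t + ∑ i ∈ Finset.Icc 1 n, a i * t ^ (p i))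
    (uhat u : EuclideanSpace ℝ (Fin N) → ℝ)
    (huhat : IsLipTest Ω uhat) (hu : IsLipTest Ω u)
    (r : ℝ) (hr : 0 ≤ r) (hLinf : ∀ x ∈ Ω, |u x - uhat x| ≤ r)
    (hPoincare : ∀ v, IsLipTest (interior (Ω \ {x ∈ Ω | 0 < uhat x - r})) v →
      lam₁ * ∫ x, (v x) ^ 2 ≤ ∫ x, ‖fderiv ℝ v x‖ ^ 2)
    (hSobolev : ∀ i ∈ Finset.Icc 1 n, ∀ v, IsLipTest Ω v →
      (∫ x, |v x| ^ (p i + 1)) ^ (1 / (p i + 1)) ≤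
        C i * (∫ x, ‖fderiv ℝ v x‖ ^ 2) ^ ((1 : ℝ) / 2))
    (hweak : ∀ v, IsLipTest Ω v →
      ∫ x, ⟪gradient u x, gradient v x⟫ = ∫ x, f (u x) * v x)
    (ρ : ℝ) (hρ : 0 ≤ ρ)
    (herr : ∫ x, ‖fderiv ℝ (u - uhat) x‖ ^ 2 ≤ ρ ^ 2)
    (hcond : ∑ i ∈ Finset.Icc 1 n,
        a i * C i ^ 2 *
          ((∫ x, (max (-uhat x) 0) ^ (p i + 1)) ^ (1 / (p i + 1)) + C i * ρ)
            ^ (p i - 1)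
        < 1 - lam / lam₁) :
    ∀ x, 0 ≤ u x :=
  nonneg_of_Linf_bound_subdomain_general Ω hΩb lam₁ lam hlam₁ hlam0 n a p C ha hp hC f hf hfb uhat u
    huhat hu r hLinf hPoincare hSobolev hweak ρ hρ herr hcond
end

section
/- Nonexistence of positive solutions for λ < λ₁ with nonpositive superlinear coefficients (one-dimensional case, λ₁((0,1)) = π²): Let n ≥ 2 be a natural number, λ < π², and a : ℕ → ℝ with a i ≤ 0 for every i ∈ {2,…,n}. Suppose u : ℝ → ℝ is continuous on the closed interval [0,1], twice continuously differentiable on the open interval (0,1) (ContDiffOn ℝ 2 u (Ioo 0 1)), satisfies u(0) = 0, u(1) = 0, u(x) > 0 for all x ∈ (0,1), and −(deriv (deriv u)) x = λ u(x) + Σ_{i=2}^n a i · u(x)^i for all x ∈ (0,1). Then a contradiction follows (no such u exists). -/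
/-!
With `φ x = sin (π x)`, the first Dirichlet eigenfunction, the Wronskian `W = u' φ - u φ'` has
`W' = (u'' + π² u) φ`. The equation and the sign conditions give `u'' + π² u ≥ (π² - λ) u > 0` on
`(0, 1)`. On the other hand `u'` is bounded (the equation bounds `u''`), so `W → 0` at both
endpoints, and Rolle's theorem produces a zero of `W'` inside `(0, 1)`.
-/

open Set Real Filter Topology

theorem Convex.exists_norm_le_of_norm_deriv_le {𝕜 G : Type*} [RCLike 𝕜] [NormedAddCommGroup G]
    [NormedSpace 𝕜 G] {f : 𝕜 → G} {s : Set 𝕜} {C : ℝ} (hs : Convex ℝ s)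
    (hsb : Bornology.IsBounded s) (hf : ∀ x ∈ s, DifferentiableAt 𝕜 f x)
    (bound : ∀ x ∈ s, ‖deriv f x‖ ≤ C) : ∃ M, ∀ x ∈ s, ‖f x‖ ≤ M := by
  rcases s.eq_empty_or_nonempty with rfl | ⟨x₀, hx₀⟩
  · exact ⟨0, by simp⟩
  obtain ⟨R, hR⟩ := hsb.subset_closedBall x₀
  have hC : 0 ≤ C := (norm_nonneg _).trans (bound x₀ hx₀)
  refine ⟨‖f x₀‖ + C * R, fun x hx => ?_⟩
  calc ‖f x‖ ≤ ‖f x₀‖ + ‖f x - f x₀‖ := norm_le_insert' _ _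
    _ ≤ ‖f x₀‖ + C * R := by
      gcongr
      calc ‖f x - f x₀‖ ≤ C * ‖x - x₀‖ := hs.norm_image_sub_le_of_norm_deriv_le hf bound hx₀ hx
        _ ≤ C * R := by gcongr; simpa [dist_eq_norm] using hR hx

noncomputable def sinWronskian (ω : ℝ) (u : ℝ → ℝ) (x : ℝ) : ℝ :=
  deriv u x * sin (ω * x) - ω * u x * cos (ω * x)

theorem hasDerivAt_sinWronskian {ω u'' x : ℝ} {u : ℝ → ℝ} (hu : DifferentiableAt ℝ u x)
    (hu' : HasDerivAt (deriv u) u'' x) :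
    HasDerivAt (sinWronskian ω u) ((u'' + ω ^ 2 * u x) * sin (ω * x)) x := by
  unfold sinWronskian
  have hωx : HasDerivAt (ω * ·) ω x := by simpa using (hasDerivAt_id x).const_mul ω
  exact ((hu'.mul hωx.sin).sub ((hu.hasDerivAt.const_mul ω).mul hωx.cos)).congr_deriv (by ring)

theorem tendsto_sinWronskian_zero {ω z C : ℝ} {u : ℝ → ℝ} {l : Filter ℝ} (hl : l ≤ 𝓝 z)
    (hz : sin (ω * z) = 0) (hu : Tendsto u l (𝓝 0)) (hbdd : ∀ᶠ x in l, ‖deriv u x‖ ≤ C) :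
    Tendsto (sinWronskian ω u) l (𝓝 0) := by
  have hsin : Tendsto (fun x => sin (ω * x)) l (𝓝 0) :=
    hz ▸ ((continuous_sin.comp (continuous_const_mul ω)).tendsto z).mono_left hl
  have hcos : IsBoundedUnder (· ≤ ·) l (norm ∘ fun x => ω * cos (ω * x)) :=
    isBoundedUnder_of_eventually_le (a := |ω|) (.of_forall fun x => by
      simpa [abs_mul] using mul_le_mul_of_nonneg_left (abs_cos_le_one (ω * x)) (abs_nonneg ω))
  have h₁ := isBoundedUnder_le_mul_tendsto_zero (isBoundedUnder_of_eventually_le hbdd) hsin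
  have h₂ := hu.zero_mul_isBoundedUnder_le hcos
  unfold sinWronskian
  simpa only [mul_left_comm _ ω, ← mul_assoc, sub_zero] using h₁.sub h₂

theorem exists_deriv_deriv_add_pi_sq_mul_eq_zero {u : ℝ → ℝ} {C : ℝ}
    (huc : ContinuousOn u (Icc 0 1)) (hu0 : u 0 = 0) (hu1 : u 1 = 0)
    (hu₁ : ∀ x ∈ Ioo (0 : ℝ) 1, DifferentiableAt ℝ u x)
    (hu₂ : ∀ x ∈ Ioo (0 : ℝ) 1, DifferentiableAt ℝ (deriv u) x)
    (hC : ∀ x ∈ Ioo (0 : ℝ) 1, ‖deriv u x‖ ≤ C) :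
    ∃ c ∈ Ioo (0 : ℝ) 1, deriv (deriv u) c + π ^ 2 * u c = 0 := by
  have hW₀ : Tendsto (sinWronskian π u) (𝓝[>] 0) (𝓝 0) :=
    tendsto_sinWronskian_zero nhdsWithin_le_nhds (by simp)
      (by simpa only [hu0] using ((continuousWithinAt_Ioo_iff_Ioi zero_lt_one).1
        ((huc 0 (left_mem_Icc.2 zero_le_one)).mono Ioo_subset_Icc_self)).tendsto)
      (eventually_of_mem (Ioo_mem_nhdsGT zero_lt_one) hC)
  have hW₁ : Tendsto (sinWronskian π u) (𝓝[<] 1) (𝓝 0) :=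
    tendsto_sinWronskian_zero nhdsWithin_le_nhds (by simp)
      (by simpa only [hu1] using ((continuousWithinAt_Ioo_iff_Iio zero_lt_one).1
        ((huc 1 (right_mem_Icc.2 zero_le_one)).mono Ioo_subset_Icc_self)).tendsto)
      (eventually_of_mem (Ioo_mem_nhdsLT zero_lt_one) hC)
  obtain ⟨c, hc, hWc⟩ := exists_hasDerivAt_eq_zero' zero_lt_one hW₀ hW₁ fun x hx =>
    hasDerivAt_sinWronskian (hu₁ x hx) (hu₂ x hx).hasDerivAt
  have hsin : 0 < sin (π * c) :=
    sin_pos_of_pos_of_lt_pi (mul_pos pi_pos hc.1) (mul_lt_of_lt_one_right pi_pos hc.2)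
  exact ⟨c, hc, (mul_eq_zero.1 hWc).resolve_right hsin.ne'⟩

theorem mul_add_sum_pow_lt_mul {lam μ y : ℝ} {a : ℕ → ℝ} {s : Finset ℕ} (hlam : lam < μ)
    (hy : 0 < y) (ha : ∀ i ∈ s, a i ≤ 0) : lam * y + ∑ i ∈ s, a i * y ^ i < μ * y := by
  have hsum : ∑ i ∈ s, a i * y ^ i ≤ 0 :=
    Finset.sum_nonpos fun i hi => mul_nonpos_of_nonpos_of_nonneg (ha i hi) (by positivity)
  nlinarith

theorem no_positive_solution_of_lam_lt_lam1_general
    (n : ℕ) (lam : ℝ) (hlam : lam < Real.pi ^ 2)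
    (a : ℕ → ℝ) (ha : ∀ i ∈ Finset.Icc 2 n, a i ≤ 0)
    (u : ℝ → ℝ)
    (huc : ContinuousOn u (Icc 0 1))
    (hud : ContDiffOn ℝ 2 u (Ioo 0 1))
    (hu0 : u 0 = 0) (hu1 : u 1 = 0)
    (hupos : ∀ x ∈ Ioo (0 : ℝ) 1, 0 < u x)
    (heq : ∀ x ∈ Ioo (0 : ℝ) 1,
      -(deriv (deriv u) x) = lam * u x + ∑ i ∈ Finset.Icc 2 n, a i * u x ^ i) :
    False := by
  have hu₁ (x) (hx : x ∈ Ioo (0 : ℝ) 1) : DifferentiableAt ℝ u x :=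
    (hud.contDiffAt (isOpen_Ioo.mem_nhds hx)).differentiableAt two_ne_zero
  have hu₂ (x) (hx : x ∈ Ioo (0 : ℝ) 1) : DifferentiableAt ℝ (deriv u) x :=
    ((hud.deriv_of_isOpen isOpen_Ioo le_rfl).contDiffAt (isOpen_Ioo.mem_nhds hx)).differentiableAt
      one_ne_zero
  obtain ⟨K, hK⟩ : ∃ K, ∀ x ∈ Icc (0 : ℝ) 1,
      ‖lam * u x + ∑ i ∈ Finset.Icc 2 n, a i * u x ^ i‖ ≤ K :=
    isCompact_Icc.exists_bound_of_continuousOn (by fun_prop)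
  obtain ⟨C, hC⟩ := (convex_Ioo (0 : ℝ) 1).exists_norm_le_of_norm_deriv_le
    (Metric.isBounded_Ioo 0 1) hu₂ fun x hx => by
      rw [← norm_neg, heq x hx]
      exact hK x (Ioo_subset_Icc_self hx)
  obtain ⟨c, hc, hc0⟩ := exists_deriv_deriv_add_pi_sq_mul_eq_zero huc hu0 hu1 hu₁ hu₂ hC
  linarith [heq c hc, mul_add_sum_pow_lt_mul hlam (hupos c hc) ha]

/-- Nonexistence of positive solutions for `λ < λ₁((0,1)) = π²` with
nonpositive superlinear coefficients (one-dimensional case). -/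
theorem no_positive_solution_of_lam_lt_lam1
    (n : ℕ) (hn : 2 ≤ n) (lam : ℝ) (hlam : lam < Real.pi ^ 2)
    (a : ℕ → ℝ) (ha : ∀ i ∈ Finset.Icc 2 n, a i ≤ 0)
    (u : ℝ → ℝ)
    (huc : ContinuousOn u (Icc 0 1))
    (hud : ContDiffOn ℝ 2 u (Ioo 0 1))
    (hu0 : u 0 = 0) (hu1 : u 1 = 0)
    (hupos : ∀ x ∈ Ioo (0 : ℝ) 1, 0 < u x)
    (heq : ∀ x ∈ Ioo (0 : ℝ) 1,
      -(deriv (deriv u) x) = lam * u x + ∑ i ∈ Finset.Icc 2 n, a i * u x ^ i) :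
    False :=
  no_positive_solution_of_lam_lt_lam1_general n lam hlam a ha u huc hud hu0 hu1 hupos heq
end
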